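/- arXiv:1410.5177 — 4 statements merged into one kernel-verified Lean document; each statement's English description precedes it below -/
import Mathlib

section
/- Let d ≥ 1 and let |u⟩, |v⟩, |ψ⟩ be unit vectors in ℂ^d. Then |⟨u|ψ⟩| · |⟨ψ|v⟩| ≤ (1 + |⟨u|v⟩|)/2. -/
open scoped BigOperators ComplexOrder

noncomputable section

/-- Standard inner product `⟨a|b⟩` on `ℂ^d` (conjugate-linear in the first argument). -/
def inn {d : ℕ} (a b : Fin d → ℂ) : ℂ := ∑ k, (starRingEnd ℂ) (a k) * b k

/-- The overlap `c(a,b) = |⟨a|b⟩|²`. -/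
def ov {d : ℕ} (a b : Fin d → ℂ) : ℝ := ‖inn a b‖ ^ 2

/-- `u` lists the vectors of an orthonormal basis of `ℂ^d`. -/
def IsONB {d : ℕ} (u : Fin d → Fin d → ℂ) : Prop :=
  ∀ i j, inn (u i) (u j) = if i = j then 1 else 0

/-- Shannon entropy (base 2) of a probability vector; note `Real.logb 2 0 = 0`. -/
def shannon {d : ℕ} (p : Fin d → ℝ) : ℝ := -∑ i, p i * Real.logb 2 (p i)

/-- Outcome probabilities `p_i = ⟨u_i|ρ|u_i⟩` of a projective measurement on the state `ρ`. -/
def probM {d : ℕ} (ρ : Matrix (Fin d) (Fin d) ℂ) (v : Fin d → Fin d → ℂ) (i : Fin d) : ℝ :=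
  (dotProduct (star (v i)) (ρ.mulVec (v i))).re

open Classical in
/-- Von Neumann entropy (base 2): `S(ρ) = -∑ λ_k log₂ λ_k` over the eigenvalues of `ρ`. -/
def vNEnt {ι : Type} [Fintype ι] [DecidableEq ι] (A : Matrix ι ι ℂ) : ℝ :=
  if h : A.IsHermitian then -∑ k, h.eigenvalues k * Real.logb 2 (h.eigenvalues k) else 0

open Classical in
/-- Matrix base-2 logarithm on the support, via the spectral decomposition
(eigenvalue `0` is sent to `0` since `Real.logb 2 0 = 0`). -/
def mlog2 {ι : Type} [Fintype ι] [DecidableEq ι] (A : Matrix ι ι ℂ) : Matrix ι ι ℂ :=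
  if h : A.IsHermitian then
    (h.eigenvectorUnitary : Matrix ι ι ℂ) *
      Matrix.diagonal (fun k => (Real.logb 2 (h.eigenvalues k) : ℂ)) *
      star (h.eigenvectorUnitary : Matrix ι ι ℂ)
  else 0

/-- Quantum relative entropy `S(ρ‖σ) = Tr(ρ log₂ ρ) - Tr(ρ log₂ σ)`. -/
def relEnt {ι : Type} [Fintype ι] [DecidableEq ι] (ρ σ : Matrix ι ι ℂ) : ℝ :=
  ((ρ * mlog2 ρ).trace - (ρ * mlog2 σ).trace).re

/-- The bound `b` of Theorem 2 of the paper, for `N = n + 2` measurements (indexed `0,…,n+1`):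
`b = max_{i_N} { ∑_{i_2,…,i_{N-1}} max_{i_1}[c(u^1_{i_1},u^2_{i_2})]
  ∏_{m=2}^{N-1} c(u^m_{i_m},u^{m+1}_{i_{m+1}}) }`.
Here `g : Fin n → Fin d` lists the middle indices `(i_2,…,i_{N-1})`, `jN = i_N`, and
`Fin.snoc g jN : Fin (n+1) → Fin d` is the chain `(i_2,…,i_N)`. -/
def bBound {d n : ℕ} (u : Fin (n + 2) → Fin d → Fin d → ℂ) : ℝ :=
  ⨆ jN : Fin d, ∑ g : Fin n → Fin d,
    (⨆ i1 : Fin d, ov (u 0 i1) (u 1 ((Fin.snoc g jN : Fin (n + 1) → Fin d) 0))) *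
      ∏ k : Fin n, ov (u k.succ.castSucc ((Fin.snoc g jN : Fin (n + 1) → Fin d) k.castSucc))
        (u k.succ.succ ((Fin.snoc g jN : Fin (n + 1) → Fin d) k.succ))

/-- Partial trace over system `A`: `(Tr_A X)_{j j'} = ∑_i X_{(i,j),(i,j')}`. -/
def trA {d dB : ℕ} (X : Matrix (Fin d × Fin dB) (Fin d × Fin dB) ℂ) :
    Matrix (Fin dB) (Fin dB) ℂ :=
  Matrix.of fun j j' => ∑ i, X (i, j) (i, j')

/-- The operator `|a⟩⟨a| ⊗ I` acting on `ℂ^d ⊗ ℂ^{dB}`. -/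
def projA {d : ℕ} (dB : ℕ) (a : Fin d → ℂ) : Matrix (Fin d × Fin dB) (Fin d × Fin dB) ℂ :=
  Matrix.kroneckerMap (· * ·) (Matrix.vecMulVec a (star a)) (1 : Matrix (Fin dB) (Fin dB) ℂ)

end

/-!
With `R = 2 |ψ⟩⟨ψ| - 1` the reflection through the line of the unit vector `ψ`,
`2 ⟨u|ψ⟩⟨ψ|v⟩ = ⟨u|R v⟩ + ⟨u|v⟩`, and `R` is unitary, so `|⟨u|R v⟩| ≤ ‖u‖ ‖v‖` by Cauchy–Schwarz.
-/

open scoped InnerProductSpace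

theorem two_mul_norm_inner_mul_norm_inner_le {𝕜 E : Type*} [RCLike 𝕜] [NormedAddCommGroup E]
    [InnerProductSpace 𝕜 E] {ψ : E} (hψ : ‖ψ‖ = 1) (u v : E) :
    2 * (‖⟪u, ψ⟫_𝕜‖ * ‖⟪ψ, v⟫_𝕜‖) ≤ ‖u‖ * ‖v‖ + ‖⟪u, v⟫_𝕜‖ := by
  have inner_reflection :
      ⟪u, (𝕜 ∙ ψ).reflection v⟫_𝕜 = 2 * (⟪u, ψ⟫_𝕜 * ⟪ψ, v⟫_𝕜) - ⟪u, v⟫_𝕜 := by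
    rw [Submodule.reflection_apply, Submodule.starProjection_unit_singleton 𝕜 hψ, inner_sub_right,
      inner_smul_right_eq_smul, inner_smul_right]
    simp only [nsmul_eq_mul, Nat.cast_ofNat]
    ring
  calc 2 * (‖⟪u, ψ⟫_𝕜‖ * ‖⟪ψ, v⟫_𝕜‖)
      = ‖⟪u, (𝕜 ∙ ψ).reflection v⟫_𝕜 + ⟪u, v⟫_𝕜‖ := by simp [inner_reflection, norm_mul]
    _ ≤ ‖⟪u, (𝕜 ∙ ψ).reflection v⟫_𝕜‖ + ‖⟪u, v⟫_𝕜‖ := norm_add_le _ _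
    _ ≤ ‖u‖ * ‖v‖ + ‖⟪u, v⟫_𝕜‖ := by
      grw [norm_inner_le_norm, LinearIsometryEquiv.norm_map]

theorem inn_eq_inner {d : ℕ} (a b : Fin d → ℂ) :
    inn a b = ⟪WithLp.toLp 2 a, WithLp.toLp 2 b⟫_ℂ := by
  simp [inn, PiLp.inner_apply, mul_comm]

theorem norm_toLp_eq_one_of_inn_self {d : ℕ} {a : Fin d → ℂ} (ha : inn a a = 1) :
    ‖WithLp.toLp 2 a‖ = 1 := by
  rw [inn_eq_inner] at ha
  have h := inner_self_eq_norm_sq (𝕜 := ℂ) (WithLp.toLp 2 a)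
  rwa [ha, RCLike.one_re, eq_comm, pow_eq_one_iff_of_nonneg (norm_nonneg _) two_ne_zero] at h

theorem abs_inner_mul_abs_inner_le_general {d : ℕ} (u v ψ : Fin d → ℂ)
    (hu : inn u u = 1) (hv : inn v v = 1) (hψ : inn ψ ψ = 1) :
    ‖inn u ψ‖ * ‖inn ψ v‖ ≤ (1 + ‖inn u v‖) / 2 := by
  have key := two_mul_norm_inner_mul_norm_inner_le (𝕜 := ℂ) (norm_toLp_eq_one_of_inn_self hψ)
    (WithLp.toLp 2 u) (WithLp.toLp 2 v)
  rw [norm_toLp_eq_one_of_inn_self hu, norm_toLp_eq_one_of_inn_self hv, ← inn_eq_inner,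
    ← inn_eq_inner, ← inn_eq_inner] at key
  linarith

/-- For unit vectors `u, v, ψ` in `ℂ^d` (`d ≥ 1`),
`|⟨u|ψ⟩| ⬝ |⟨ψ|v⟩| ≤ (1 + |⟨u|v⟩|)/2`. -/
theorem abs_inner_mul_abs_inner_le {d : ℕ} (hd : 1 ≤ d) (u v ψ : Fin d → ℂ)
    (hu : inn u u = 1) (hv : inn v v = 1) (hψ : inn ψ ψ = 1) :
    ‖inn u ψ‖ * ‖inn ψ v‖ ≤ (1 + ‖inn u v‖) / 2 :=
  abs_inner_mul_abs_inner_le_general u v ψ hu hv hψ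
end

section
/- Let ρ be a positive definite density matrix on ℂ^d and let V = {|v_j⟩} be a projective measurement given by an orthonormal basis of ℂ^d. Then H(V) − S(ρ) = S(ρ ‖ ∑_j |v_j⟩⟨v_j| ρ |v_j⟩⟨v_j|), i.e. the Shannon entropy of the measurement exceeds the von Neumann entropy of ρ exactly by the quantum relative entropy between ρ and its pinching in the basis V. -/
open scoped BigOperators ComplexOrder

/-!
Let `W` be the unitary whose columns are the `v j` and `p` the outcome distribution. Each term of
the pinching is `p j • |v j⟩⟨v j|`, so the pinching `σ` is `W diag(p) W*`. A functional calculus may be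
computed in any unitary diagonalization, because the change of basis between two of them
intertwines the diagonal matrices and hence also their images under any function. Thus
`log₂ σ = W diag(log₂ p) W*` and `Tr(ρ log₂ σ) = ∑ (W* ρ W)ⱼⱼ log₂ pⱼ = ∑ pⱼ log₂ pⱼ`, while
`Tr(ρ log₂ ρ) = ∑ λₖ log₂ λₖ` in the eigenbasis of `ρ`.
-/

open Matrix Unitary

namespace Matrix

section Pinching

variable {m n α : Type*} [Fintype m] [Fintype n] [DecidableEq n] [CommSemiring α] [StarRing α]

lemma sum_vecMulVec_col_mul_mul_vecMulVec_col (W : Matrix m n α) (A : Matrix m m α) :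
    ∑ j, vecMulVec (Wᵀ j) (star (Wᵀ j)) * A * vecMulVec (Wᵀ j) (star (Wᵀ j)) =
      W * diagonal (fun j => (Wᴴ * A * W) j j) * Wᴴ := by
  ext i k
  rw [sum_apply, mul_apply]
  refine Finset.sum_congr rfl fun j _ => ?_
  rw [mul_diagonal]
  simp only [vecMulVec_apply, mul_apply, conjTranspose_apply, transpose_apply, Pi.star_apply,
    Finset.sum_mul, Finset.mul_sum]
  exact Finset.sum_congr rfl fun _ _ => Finset.sum_congr rfl fun _ _ => by ring

end Pinching

-- `W i j * a j = b i * W i j` forces `a j = b i` wherever `W i j ≠ 0`.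
lemma mul_diagonal_comp_eq_diagonal_comp_mul {m n R : Type*} [Fintype m] [Fintype n]
    [DecidableEq m] [DecidableEq n] [CommRing R] [NoZeroDivisors R]
    {W : Matrix m n R} {a : n → R} {b : m → R} (h : W * diagonal a = diagonal b * W)
    (F : R → R) : W * diagonal (F ∘ a) = diagonal (F ∘ b) * W := by
  ext i j
  have hij := congrFun₂ h i j
  simp only [mul_diagonal, diagonal_mul] at hij ⊢
  rcases eq_or_ne (W i j) 0 with hW | hW
  · simp [hW]
  · rw [mul_comm (b i)] at hij
    rw [Function.comp_apply, Function.comp_apply, mul_left_cancel₀ hW hij, mul_comm]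

variable {ι 𝕜 : Type*} [Fintype ι] [DecidableEq ι] [RCLike 𝕜]

lemma IsHermitian.cfc_eq_of_eq_conjStarAlgAut {A : Matrix ι ι 𝕜} (hA : A.IsHermitian)
    {U : unitaryGroup ι 𝕜} {μ : ι → ℝ}
    (hAU : A = conjStarAlgAut 𝕜 _ U (diagonal (RCLike.ofReal ∘ μ))) (f : ℝ → ℝ) :
    hA.cfc f = conjStarAlgAut 𝕜 _ U (diagonal (RCLike.ofReal ∘ f ∘ μ)) := by
  have hV := hA.conjStarAlgAut_star_eigenvectorUnitary
  rw [conjStarAlgAut_star_apply] at hV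
  rw [IsHermitian.cfc, conjStarAlgAut_apply]
  obtain ⟨U, hUmem⟩ := U
  simp only [conjStarAlgAut_apply] at hAU ⊢
  set V : Matrix ι ι 𝕜 := (hA.eigenvectorUnitary : Matrix ι ι 𝕜)
  have hVV : V * star V = 1 := mul_star_self_of_mem hA.eigenvectorUnitary.2
  have hUU : star U * U = 1 := star_mul_self_of_mem hUmem
  have hUU' : U * star U = 1 := mul_star_self_of_mem hUmem
  have hintertwine : (star V * U) * diagonal (RCLike.ofReal ∘ μ) =
      diagonal (RCLike.ofReal ∘ hA.eigenvalues) * (star V * U) := by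
    rw [← hV, hAU]
    simp only [mul_assoc]
    rw [← mul_assoc V, hVV, one_mul, hUU, mul_one]
  have hF : (star V * U) * diagonal (RCLike.ofReal ∘ f ∘ μ) =
      diagonal (RCLike.ofReal ∘ f ∘ hA.eigenvalues) * (star V * U) := by
    simpa [Function.comp_def] using
      mul_diagonal_comp_eq_diagonal_comp_mul hintertwine (fun z => (f (RCLike.re z) : 𝕜))
  calc V * diagonal (RCLike.ofReal ∘ f ∘ hA.eigenvalues) * star V
      = V * (diagonal (RCLike.ofReal ∘ f ∘ hA.eigenvalues) * (star V * U)) * star U := by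
        simp only [mul_assoc, hUU', mul_one]
    _ = V * ((star V * U) * diagonal (RCLike.ofReal ∘ f ∘ μ)) * star U := by rw [hF]
    _ = U * diagonal (RCLike.ofReal ∘ f ∘ μ) * star U := by
        simp only [← mul_assoc, hVV, one_mul]

lemma isHermitian_conjStarAlgAut_diagonal_ofReal (U : unitaryGroup ι 𝕜) (μ : ι → ℝ) :
    (conjStarAlgAut 𝕜 _ U (diagonal (RCLike.ofReal ∘ μ))).IsHermitian :=
  isHermitian_mul_mul_conjTranspose _ <| isHermitian_diagonal_of_self_adjoint _ <| by
    ext i; simp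

lemma trace_mul_conjStarAlgAut_diagonal (A : Matrix ι ι 𝕜) (U : unitaryGroup ι 𝕜) (f : ι → 𝕜) :
    (A * conjStarAlgAut 𝕜 _ U (diagonal f)).trace =
      ∑ i, conjStarAlgAut 𝕜 _ (star U) A i i * f i := by
  rw [conjStarAlgAut_apply, conjStarAlgAut_star_apply, ← mul_assoc, trace_mul_cycle, ← mul_assoc]
  simp [trace, mul_diagonal]

end Matrix

section MatrixLog

variable {ι : Type} [Fintype ι] [DecidableEq ι]

lemma mlog2_eq_cfc {A : Matrix ι ι ℂ} (hA : A.IsHermitian) : mlog2 A = hA.cfc (Real.logb 2) := by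
  rw [mlog2, dif_pos hA, IsHermitian.cfc, conjStarAlgAut_apply]
  rfl

lemma trace_mul_mlog2_of_eq_conjStarAlgAut (A : Matrix ι ι ℂ) {B : Matrix ι ι ℂ}
    {U : unitaryGroup ι ℂ} {μ : ι → ℝ}
    (hB : B = conjStarAlgAut ℂ _ U (diagonal (RCLike.ofReal ∘ μ))) :
    (A * mlog2 B).trace = ∑ i, conjStarAlgAut ℂ _ (star U) A i i * Real.logb 2 (μ i) := by
  have hBH : B.IsHermitian := hB ▸ isHermitian_conjStarAlgAut_diagonal_ofReal U μ
  rw [mlog2_eq_cfc hBH, hBH.cfc_eq_of_eq_conjStarAlgAut hB, trace_mul_conjStarAlgAut_diagonal]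
  rfl

end MatrixLog

lemma isONB_iff_mem_unitaryGroup {d : ℕ} (u : Fin d → Fin d → ℂ) :
    IsONB u ↔ (of u)ᵀ ∈ unitaryGroup (Fin d) ℂ := by
  rw [mem_unitaryGroup_iff', ← Matrix.ext_iff]
  refine forall₂_congr fun i j => ?_
  simp [inn, mul_apply, one_apply]

theorem measured_entropy_eq_relEnt_general {d : ℕ} (ρ : Matrix (Fin d) (Fin d) ℂ)
    (hρ : ρ.PosDef) (v : Fin d → Fin d → ℂ) (hv : IsONB v) :
    shannon (probM ρ v) - vNEnt ρ =
      relEnt ρ (∑ j, Matrix.vecMulVec (v j) (star (v j)) * ρ *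
        Matrix.vecMulVec (v j) (star (v j))) := by
  have hρH := hρ.isHermitian
  have hprob : ∀ j, ((of v)ᵀᴴ * ρ * (of v)ᵀ) j j = probM ρ v j := fun j => by
    rw [← (isHermitian_conjTranspose_mul_mul (of v)ᵀ hρH).coe_re_apply_self j, mul_mul_apply]
    rfl
  have hpinch : ∑ j, vecMulVec (v j) (star (v j)) * ρ * vecMulVec (v j) (star (v j)) =
      conjStarAlgAut ℂ _ ⟨(of v)ᵀ, (isONB_iff_mem_unitaryGroup v).mp hv⟩
        (diagonal (RCLike.ofReal ∘ probM ρ v)) := by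
    refine (sum_vecMulVec_col_mul_mul_vecMulVec_col (of v)ᵀ ρ).trans ?_
    simp [hprob, Function.comp_def, star_eq_conjTranspose]
  rw [relEnt, hpinch, trace_mul_mlog2_of_eq_conjStarAlgAut ρ hρH.spectral_theorem,
    trace_mul_mlog2_of_eq_conjStarAlgAut ρ rfl, hρH.conjStarAlgAut_star_eigenvectorUnitary,
    shannon, vNEnt, dif_pos hρH]
  simp only [sub_neg_eq_add, Complex.coe_algebraMap, diagonal_apply_eq, Function.comp_apply,
    conjStarAlgAut_apply, coe_star, star_eq_conjTranspose, conjTranspose_conjTranspose, hprob,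
    Complex.sub_re, Complex.re_sum, Complex.mul_re, Complex.ofReal_re, Complex.ofReal_im, mul_zero,
    sub_zero]
  ring

/-- for a positive definite density matrix `ρ` and a projective measurement `V`,
`H(V) - S(ρ) = S(ρ ‖ ∑_j |v_j⟩⟨v_j| ρ |v_j⟩⟨v_j|)`. -/
theorem measured_entropy_eq_relEnt {d : ℕ} (ρ : Matrix (Fin d) (Fin d) ℂ)
    (hρ : ρ.PosDef) (hρ1 : ρ.trace = 1) (v : Fin d → Fin d → ℂ) (hv : IsONB v) :
    shannon (probM ρ v) - vNEnt ρ =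
      relEnt ρ (∑ j, Matrix.vecMulVec (v j) (star (v j)) * ρ *
        Matrix.vecMulVec (v j) (star (v j))) :=
  measured_entropy_eq_relEnt_general ρ hρ v hv
end

section
/- Let N ≥ 2, let ρ be a positive definite density matrix on ℂ^d, and let M_1,…,M_N be projective measurements given by orthonormal bases {|u^m_i⟩}, with p^1_{i_1} = ⟨u^1_{i_1}|ρ|u^1_{i_1}⟩. Then −N·S(ρ) + ∑_{m=1}^N H(M_m) ≥ S(ρ ‖ ∑_j β^N_j |u^N_j⟩⟨u^N_j|), where β^N_j := ∑_{i_1,…,i_{N−1}} p^1_{i_1} · c(u^1_{i_1}, u^2_{i_2}) · c(u^2_{i_2}, u^3_{i_3}) ⋯ c(u^{N−1}_{i_{N−1}}, u^N_j). -/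
/-!
Write `ρ = ∑ₐ λₐ |φₐ⟩⟨φₐ|` and `pᵐ` for the outcome distribution of `Mₘ`. The coefficients satisfy
`β¹ = p¹` and `βᵐ⁺¹ⱼ = ∑ᵢ βᵐᵢ c(uᵐᵢ, uᵐ⁺¹ⱼ)`: `βᵐ⁺¹` is the outcome distribution of measuring
`σₘ = ∑ᵢ βᵐᵢ |uᵐᵢ⟩⟨uᵐᵢ|` in the basis `uᵐ⁺¹`. Since `σₘ` is diagonal in the basis `uᵐ`,
`S(ρ‖σₘ) = -S(ρ) + H(Mₘ) + D(pᵐ‖βᵐ)`, so monotonicity of the relative entropy under the measurement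
`Mₘ₊₁` gives `D(pᵐ⁺¹‖βᵐ⁺¹) ≤ -S(ρ) + H(Mₘ) + D(pᵐ‖βᵐ)`. Telescoping from `D(p¹‖β¹) = 0` and using
the same identity for `S(ρ‖σ_N)` gives the claim.

Monotonicity under a measurement is proved through the integral representation
`log α - log β = ∫₀^∞ (1/(1+s) - β/(α+sβ)) ds`: for each `s ≥ 0` the quadratic quantity
`∑ t²/(r + s t)` can only decrease under the measurement, by a variational argument with a test
operator diagonal in the measured basis.
-/

open scoped BigOperators ComplexOrder

/-- The coefficient `β^N_j = ∑_{i_1,…,i_{N-1}} p^1_{i_1} c(u^1_{i_1},u^2_{i_2}) ⋯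
c(u^{N-1}_{i_{N-1}},u^N_j)` with `N = n + 2`; `g : Fin (n+1) → Fin d` lists `(i_1,…,i_{N-1})`
and `Fin.snoc g j` is the chain `(i_1,…,i_{N-1},j)`. -/
noncomputable def betaCoef {d n : ℕ} (ρ : Matrix (Fin d) (Fin d) ℂ)
    (u : Fin (n + 2) → Fin d → Fin d → ℂ) (j : Fin d) : ℝ :=
  ∑ g : Fin (n + 1) → Fin d, probM ρ (u 0) (g 0) *
    ∏ k : Fin (n + 1),
      ov (u k.castSucc (g k)) (u k.succ ((Fin.snoc g j : Fin (n + 2) → Fin d) k.succ))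

open Finset Matrix

section Overlap

variable {d : ℕ}

lemma conj_inn (a b : Fin d → ℂ) : starRingEnd ℂ (inn a b) = inn b a := by
  simp [inn, map_sum, mul_comm]

lemma inn_mul_inn_swap (a b : Fin d → ℂ) : inn a b * inn b a = ov a b := by
  rw [← conj_inn a b, Complex.mul_conj, ov, Complex.normSq_eq_norm_sq, Complex.ofReal_pow]

lemma ov_comm (a b : Fin d → ℂ) : ov a b = ov b a := by
  rw [ov, ov, ← conj_inn, Complex.norm_conj]

lemma ov_nonneg (a b : Fin d → ℂ) : 0 ≤ ov a b := sq_nonneg _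

def basisMatrix (w : Fin d → Fin d → ℂ) : Matrix (Fin d) (Fin d) ℂ := Matrix.of fun k j => w j k

lemma vecMul_basisMatrix (w : Fin d → Fin d → ℂ) (x : Fin d → ℂ) (j : Fin d) :
    (star x ᵥ* basisMatrix w) j = inn x (w j) := by
  simp [vecMul, dotProduct, basisMatrix, inn]

lemma conjTranspose_basisMatrix_mulVec (w : Fin d → Fin d → ℂ) (y : Fin d → ℂ) (j : Fin d) :
    ((basisMatrix w)ᴴ *ᵥ y) j = inn (w j) y := by
  simp [mulVec, dotProduct, basisMatrix, inn, conjTranspose_apply]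

lemma isONB_iff_conjTranspose_mul_self (w : Fin d → Fin d → ℂ) :
    IsONB w ↔ (basisMatrix w)ᴴ * basisMatrix w = 1 := by
  have h : ∀ i j, ((basisMatrix w)ᴴ * basisMatrix w) i j = inn (w i) (w j) := fun i j => by
    simp [basisMatrix, mul_apply, inn]
  simp only [IsONB, ← h, ← one_apply]
  exact Matrix.ext_iff

lemma IsONB.basisMatrix_mem_unitaryGroup {w : Fin d → Fin d → ℂ} (hw : IsONB w) :
    basisMatrix w ∈ unitaryGroup (Fin d) ℂ :=
  mem_unitaryGroup_iff'.mpr ((isONB_iff_conjTranspose_mul_self w).mp hw)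

lemma IsONB.inn_self {w : Fin d → Fin d → ℂ} (hw : IsONB w) (i : Fin d) : inn (w i) (w i) = 1 := by
  simp [hw i i]

lemma IsONB.sum_inn_mul_inn {w : Fin d → Fin d → ℂ} (hw : IsONB w) (x y : Fin d → ℂ) :
    ∑ j, inn x (w j) * inn (w j) y = inn x y := by
  have hW : basisMatrix w * (basisMatrix w)ᴴ = 1 :=
    mem_unitaryGroup_iff.mp hw.basisMatrix_mem_unitaryGroup
  calc ∑ j, inn x (w j) * inn (w j) y
      = (star x ᵥ* basisMatrix w) ⬝ᵥ ((basisMatrix w)ᴴ *ᵥ y) := by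
        simp only [dotProduct, vecMul_basisMatrix, conjTranspose_basisMatrix_mulVec]
    _ = inn x y := by rw [← dotProduct_mulVec, mulVec_mulVec, hW, one_mulVec]; rfl

lemma IsONB.sum_ov {w : Fin d → Fin d → ℂ} (hw : IsONB w) (x : Fin d → ℂ) :
    ∑ j, ov x (w j) = (inn x x).re := by
  simpa [inn_mul_inn_swap] using congrArg Complex.re (hw.sum_inn_mul_inn x x)

lemma IsONB.sum_ov_eq_one {w v : Fin d → Fin d → ℂ} (hw : IsONB w) (hv : IsONB v) (i : Fin d) :
    ∑ j, ov (v i) (w j) = 1 := by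
  simp [hw.sum_ov, hv.inn_self]

lemma IsONB.sum_ov_eq_one_left {w v : Fin d → Fin d → ℂ} (hw : IsONB w) (hv : IsONB v) (i : Fin d) :
    ∑ j, ov (w j) (v i) = 1 := by
  simp_rw [ov_comm (w _)]; exact hw.sum_ov_eq_one hv i

end Overlap

section MeasureDiag

variable {d : ℕ}

/-- Outcome distribution of measuring the state `∑ᵢ qᵢ |wᵢ⟩⟨wᵢ|` in the basis `v`. -/
noncomputable def measureDiag (w : Fin d → Fin d → ℂ) (q : Fin d → ℝ) (v : Fin d → Fin d → ℂ)
    (j : Fin d) : ℝ :=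
  ∑ i, q i * ov (w i) (v j)

lemma measureDiag_pos {w v : Fin d → Fin d → ℂ} (hw : IsONB w) (hv : IsONB v) {q : Fin d → ℝ}
    (hq : ∀ i, 0 < q i) (j : Fin d) : 0 < measureDiag w q v j := by
  obtain ⟨i, hi⟩ : ∃ i, 0 < ov (w i) (v j) := by
    by_contra! h
    have := hw.sum_ov_eq_one_left hv j
    simp [fun i => le_antisymm (h i) (ov_nonneg _ _)] at this
  exact sum_pos' (fun i _ => mul_nonneg (hq i).le (ov_nonneg _ _))
    ⟨i, mem_univ i, mul_pos (hq i) hi⟩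

lemma sum_measureDiag {w v : Fin d → Fin d → ℂ} (hw : IsONB w) (hv : IsONB v) (q : Fin d → ℝ) :
    ∑ j, measureDiag w q v j = ∑ i, q i := by
  simp_rw [measureDiag]
  rw [sum_comm]
  simp [← mul_sum, hv.sum_ov_eq_one hw]

end MeasureDiag

section DiagForm

variable {d : ℕ}

/-- The matrix element `⟨x|Y|y⟩` of `Y = ∑ⱼ wⱼ |vⱼ⟩⟨vⱼ|`. -/
noncomputable def diagForm (v : Fin d → Fin d → ℂ) (w : Fin d → ℝ) (x y : Fin d → ℂ) : ℂ :=
  ∑ j, (w j : ℂ) * (inn x (v j) * inn (v j) y)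

lemma conj_diagForm (v : Fin d → Fin d → ℂ) (w : Fin d → ℝ) (x y : Fin d → ℂ) :
    starRingEnd ℂ (diagForm v w x y) = diagForm v w y x := by
  simp only [diagForm, map_sum, map_mul, Complex.conj_ofReal, conj_inn]
  exact sum_congr rfl fun j _ => by ring

lemma diagForm_self (v : Fin d → Fin d → ℂ) (w : Fin d → ℝ) (x : Fin d → ℂ) :
    diagForm v w x x = ((∑ j, w j * ov x (v j) : ℝ) : ℂ) := by
  simp [diagForm, inn_mul_inn_swap]

lemma IsONB.diagForm_basis {v : Fin d → Fin d → ℂ} (hv : IsONB v) (w : Fin d → ℝ) (i : Fin d)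
    (y : Fin d → ℂ) : diagForm v w (v i) y = w i * inn (v i) y := by
  simp [diagForm, hv i]

lemma IsONB.sum_inn_mul_diagForm {e : Fin d → Fin d → ℂ} (he : IsONB e) (v : Fin d → Fin d → ℂ)
    (w : Fin d → ℝ) (x y : Fin d → ℂ) :
    ∑ k, inn x (e k) * diagForm v w (e k) y = diagForm v w x y := by
  simp_rw [diagForm, mul_sum]
  rw [sum_comm]
  refine sum_congr rfl fun j _ => ?_
  rw [← he.sum_inn_mul_inn x (v j), sum_mul, mul_sum]
  exact sum_congr rfl fun k _ => by ring

lemma IsONB.sum_diagForm_mul_diagForm {e v : Fin d → Fin d → ℂ} (he : IsONB e) (hv : IsONB v)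
    (w : Fin d → ℝ) (x y : Fin d → ℂ) :
    ∑ k, diagForm v w x (e k) * diagForm v w (e k) y = diagForm v (w ^ 2) x y := by
  have h : ∀ k, diagForm v w x (e k) * diagForm v w (e k) y
      = ∑ j, (w j : ℂ) * inn x (v j) * (inn (v j) (e k) * diagForm v w (e k) y) := fun k => by
    rw [diagForm, sum_mul]; exact sum_congr rfl fun j _ => by ring
  simp_rw [h]
  rw [sum_comm]
  simp_rw [← mul_sum, he.sum_inn_mul_diagForm, hv.diagForm_basis, diagForm]
  exact sum_congr rfl fun j _ => by simp only [Pi.pow_apply]; push_cast; ring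

lemma IsONB.sum_normSq_diagForm {e v : Fin d → Fin d → ℂ} (he : IsONB e) (hv : IsONB v)
    (w : Fin d → ℝ) (x : Fin d → ℂ) :
    ∑ k, Complex.normSq (diagForm v w x (e k)) = ∑ j, w j ^ 2 * ov x (v j) := by
  have h := congrArg Complex.re (he.sum_diagForm_mul_diagForm hv w x x)
  simp_rw [← conj_diagForm v w x, Complex.mul_conj, diagForm_self] at h
  simpa only [Complex.re_sum, Complex.ofReal_re, Pi.pow_apply] using h

end DiagForm

lemma two_mul_re_mul_sub_le (z ω : ℂ) (q : ℝ) {m : ℝ} (hm : 0 < m) :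
    2 * q * (z * ω).re - m * Complex.normSq ω ≤ q ^ 2 * Complex.normSq z / m := by
  have h := Complex.normSq_nonneg (q * starRingEnd ℂ z - m * ω)
  rw [le_div_iff₀ hm]
  simp only [Complex.normSq_sub, Complex.normSq_ofReal, Complex.normSq_conj,
    map_mul, Complex.conj_ofReal] at h
  have hre : ((q : ℂ) * starRingEnd ℂ z * ((m : ℂ) * starRingEnd ℂ ω)).re = q * m * (z * ω).re := by
    rw [show (q : ℂ) * starRingEnd ℂ z * ((m : ℂ) * starRingEnd ℂ ω)
        = starRingEnd ℂ (((q * m : ℝ) : ℂ) * (z * ω)) by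
          simp only [Complex.ofReal_mul, map_mul, Complex.conj_ofReal]; ring,
      Complex.conj_re, Complex.re_ofReal_mul]
  nlinarith

lemma sq_div_eq_two_mul_sub (t c : ℝ) : t ^ 2 / c = 2 * (t / c * t) - (t / c) ^ 2 * c := by
  rcases eq_or_ne c 0 with rfl | hc
  · simp
  · field_simp; ring

/-- With `ρ = ∑ₐ μₐ |φₐ⟩⟨φₐ|`, `σ = ∑ᵢ qᵢ |uᵢ⟩⟨uᵢ|` and the test operator `Y = ∑ⱼ wⱼ |vⱼ⟩⟨vⱼ|`,
`wⱼ = tⱼ / (rⱼ + s tⱼ)`, the left side equals `2 Tr(σY) - Tr(ρY²) - s Tr(σY²)`; expanding this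
in the matrix units `|φₐ⟩⟨uᵢ|` and completing the square termwise gives the right side. -/
theorem sum_sq_div_measureDiag_le {d : ℕ} {φ u v : Fin d → Fin d → ℂ} (hφ : IsONB φ)
    (hu : IsONB u) (hv : IsONB v) {μ q : Fin d → ℝ} (hμ : ∀ a, 0 < μ a) (hq : ∀ i, 0 ≤ q i)
    {s : ℝ} (hs : 0 ≤ s) :
    ∑ j, measureDiag u q v j ^ 2 / (measureDiag φ μ v j + s * measureDiag u q v j)
      ≤ ∑ a, ∑ i, ov (φ a) (u i) * q i ^ 2 / (μ a + s * q i) := by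
  set r := measureDiag φ μ v
  set t := measureDiag u q v
  set w : Fin d → ℝ := fun j => t j / (r j + s * t j)
  set ω : Fin d → Fin d → ℂ := fun a i => diagForm v w (φ a) (u i)
  have htr : ∑ a, ∑ i, q i * (inn (u i) (φ a) * ω a i).re = ∑ j, w j * t j := by
    rw [sum_comm]
    simp_rw [← mul_sum, ← Complex.re_sum, ω, hφ.sum_inn_mul_diagForm, diagForm_self,
      Complex.ofReal_re, mul_sum]
    rw [sum_comm]
    exact sum_congr rfl fun j _ => by
      simp only [t, measureDiag, mul_sum]; exact sum_congr rfl fun i _ => by ring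
  have hρ : ∑ a, ∑ i, μ a * Complex.normSq (ω a i) = ∑ j, w j ^ 2 * r j := by
    simp_rw [← mul_sum, ω, hu.sum_normSq_diagForm hv, mul_sum]
    rw [sum_comm]
    exact sum_congr rfl fun j _ => by
      simp only [r, measureDiag, mul_sum]; exact sum_congr rfl fun a _ => by ring
  have hσ : ∑ a, ∑ i, q i * Complex.normSq (ω a i) = ∑ j, w j ^ 2 * t j := by
    simp_rw [ω, ← Complex.normSq_conj (diagForm _ _ _ _), conj_diagForm]
    rw [sum_comm]
    simp_rw [← mul_sum, hφ.sum_normSq_diagForm hv, mul_sum]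
    rw [sum_comm]
    exact sum_congr rfl fun j _ => by
      simp only [t, measureDiag, mul_sum]; exact sum_congr rfl fun i _ => by ring
  have hov : ∀ a i, ov (φ a) (u i) = Complex.normSq (inn (u i) (φ a)) := fun a i => by
    rw [ov_comm, ov, Complex.normSq_eq_norm_sq]
  calc ∑ j, t j ^ 2 / (r j + s * t j)
      = 2 * ∑ j, w j * t j - ∑ j, w j ^ 2 * r j - s * ∑ j, w j ^ 2 * t j := by
        simp only [sq_div_eq_two_mul_sub (t _), mul_sum, ← sum_sub_distrib]
        exact sum_congr rfl fun j _ => by ring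
    _ = ∑ a, ∑ i, (2 * q i * (inn (u i) (φ a) * ω a i).re
          - (μ a + s * q i) * Complex.normSq (ω a i)) := by
        rw [← htr, ← hρ, ← hσ]
        simp only [mul_sum, ← sum_sub_distrib]
        exact sum_congr rfl fun a _ => sum_congr rfl fun i _ => by ring
    _ ≤ ∑ a, ∑ i, ov (φ a) (u i) * q i ^ 2 / (μ a + s * q i) := by
        gcongr with a _ i _
        rw [hov, mul_comm (Complex.normSq _)]
        exact two_mul_re_mul_sub_le _ _ _ (by nlinarith [hμ a, mul_nonneg hs (hq i)])

section PartialRelEnt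

open Filter Topology Real

variable {ι : Type*} [Fintype ι]

/-- `∫₀ˢ ∑ₓ Pₓ αₓ (1/(1+σ) - βₓ/(αₓ+σβₓ)) dσ`, which tends to the relative entropy
`∑ₓ Pₓ αₓ (log αₓ - log βₓ)` as `s → ∞`. -/
noncomputable def partialRelEnt (P α β : ι → ℝ) (s : ℝ) : ℝ :=
  ∑ x, P x * α x * (log (α x) + log (1 + s) - log (α x + s * β x))

lemma partialRelEnt_zero (P α β : ι → ℝ) : partialRelEnt P α β 0 = 0 := by
  simp [partialRelEnt]

lemma hasDerivAt_partialRelEnt (P : ι → ℝ) {α β : ι → ℝ} (hα : ∀ x, 0 < α x)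
    (hβ : ∀ x, 0 < β x) {s : ℝ} (hs : 0 ≤ s) :
    HasDerivAt (partialRelEnt P α β)
      (∑ x, P x * α x * (1 / (1 + s) - β x / (α x + s * β x))) s := by
  have hlog1 : HasDerivAt (fun s : ℝ => log (1 + s)) (1 / (1 + s)) s := by
    simpa using ((hasDerivAt_id s).const_add 1).log (by simp only [id]; linarith)
  refine HasDerivAt.fun_sum fun x _ => HasDerivAt.const_mul _ ?_
  have hlin : HasDerivAt (fun s : ℝ => α x + s * β x) (β x) s := by
    simpa using ((hasDerivAt_id s).mul_const (β x)).const_add (α x)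
  exact (hlog1.const_add _).sub (hlin.log (by nlinarith [hα x, hβ x]))

lemma tendsto_log_one_add_sub_log_add_mul {a b : ℝ} (ha : 0 < a) (hb : 0 < b) :
    Tendsto (fun s : ℝ => log (1 + s) - log (a + s * b)) atTop (𝓝 (-log b)) := by
  have hinv : Tendsto (fun s : ℝ => s⁻¹) atTop (𝓝 0) := tendsto_inv_atTop_zero
  have h : Tendsto (fun s : ℝ => log (s⁻¹ + 1) - log (a * s⁻¹ + b)) atTop
      (𝓝 (log (0 + 1) - log (a * 0 + b))) :=
    ((hinv.add_const 1).log (by norm_num)).sub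
      ((hinv.const_mul a |>.add_const b).log (by simp [hb.ne']))
  simp only [zero_add, log_one, mul_zero, zero_sub] at h
  refine h.congr' ?_
  filter_upwards [eventually_gt_atTop 0] with s hs
  have h1 : 1 + s = s * (s⁻¹ + 1) := by field_simp
  have h2 : a + s * b = s * (a * s⁻¹ + b) := by field_simp
  rw [h1, h2, log_mul hs.ne' (by positivity), log_mul hs.ne' (by positivity)]
  ring

lemma tendsto_partialRelEnt (P : ι → ℝ) {α β : ι → ℝ} (hα : ∀ x, 0 < α x)
    (hβ : ∀ x, 0 < β x) :
    Tendsto (partialRelEnt P α β) atTop (𝓝 (∑ x, P x * α x * (log (α x) - log (β x)))) := by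
  refine tendsto_finsetSum _ fun x _ => Tendsto.const_mul _ ?_
  simpa only [add_sub_assoc, ← sub_eq_add_neg] using
    (tendsto_log_one_add_sub_log_add_mul (hα x) (hβ x)).const_add (log (α x))

/-- `partialRelEnt P α β - partialRelEnt 1 r t` vanishes at `0` and has derivative
`s (∑ Pβ²/(α+sβ) - ∑ t²/(r+st)) ≥ 0`, so its limit, the difference of the two relative
entropies, is nonnegative. -/
theorem sum_mul_log_sub_le_of_sum_sq_div_le {κ : Type*} [Fintype κ] {P α β : ι → ℝ}
    {r t : κ → ℝ} (hα : ∀ x, 0 < α x) (hβ : ∀ x, 0 < β x) (hr : ∀ j, 0 < r j)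
    (ht : ∀ j, 0 < t j) (hPα : ∑ x, P x * α x = ∑ j, r j) (hPβ : ∑ x, P x * β x = ∑ j, t j)
    (hle : ∀ s, 0 ≤ s →
      ∑ j, t j ^ 2 / (r j + s * t j) ≤ ∑ x, P x * β x ^ 2 / (α x + s * β x)) :
    ∑ j, r j * (log (r j) - log (t j)) ≤ ∑ x, P x * α x * (log (α x) - log (β x)) := by
  have key : ∀ (s : ℝ), 0 ≤ s → ∀ {a b c : ℝ}, 0 < a → 0 < b →
      c * a * (b / (a + s * b)) = c * b - s * (c * b ^ 2 / (a + s * b)) := by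
    intro s hs a b c ha hb
    have : a + s * b ≠ 0 := by nlinarith
    field_simp; ring
  have hderiv : ∀ s, 0 ≤ s → HasDerivAt (fun s => partialRelEnt P α β s - partialRelEnt 1 r t s)
      (s * (∑ x, P x * β x ^ 2 / (α x + s * β x) - ∑ j, t j ^ 2 / (r j + s * t j))) s := by
    intro s hs
    refine ((hasDerivAt_partialRelEnt P hα hβ hs).sub
      (hasDerivAt_partialRelEnt 1 hr ht hs)).congr_deriv ?_
    have key' : ∀ j, r j * (t j / (r j + s * t j)) = t j - s * (t j ^ 2 / (r j + s * t j)) :=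
      fun j => by simpa using key s hs (c := 1) (hr j) (ht j)
    simp only [mul_sub, sum_sub_distrib, ← sum_mul, hPα, Pi.one_apply, one_mul,
      key s hs (hα _) (hβ _), key', ← mul_sum, hPβ]
    ring
  have hmono : MonotoneOn (fun s => partialRelEnt P α β s - partialRelEnt 1 r t s) (Set.Ici 0) :=
    monotoneOn_of_hasDerivWithinAt_nonneg (convex_Ici 0)
      (fun s hs => (hderiv s hs).continuousAt.continuousWithinAt)
      (fun s hs => (hderiv s (interior_subset hs)).hasDerivWithinAt)
      (fun s hs => mul_nonneg (interior_subset hs) (sub_nonneg.mpr (hle s (interior_subset hs))))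
  have hlim := (tendsto_partialRelEnt P hα hβ).sub (tendsto_partialRelEnt 1 hr ht)
  have h := ge_of_tendsto (b := 0) hlim <| (eventually_ge_atTop 0).mono fun s hs => by
    simpa [partialRelEnt_zero] using hmono Set.self_mem_Ici hs hs
  simpa only [Pi.one_apply, one_mul, sub_nonneg] using h

end PartialRelEnt

/-- Monotonicity of the relative entropy under the measurement in the basis `v`: the right side is
`S(ρ‖σ)` (in nats) for `ρ = ∑ₐ μₐ |φₐ⟩⟨φₐ|` and `σ = ∑ᵢ qᵢ |uᵢ⟩⟨uᵢ|`. -/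
theorem sum_measureDiag_mul_log_sub_le {d : ℕ} {φ u v : Fin d → Fin d → ℂ} (hφ : IsONB φ)
    (hu : IsONB u) (hv : IsONB v) {μ q : Fin d → ℝ} (hμ : ∀ a, 0 < μ a) (hq : ∀ i, 0 < q i) :
    ∑ j, measureDiag φ μ v j * (Real.log (measureDiag φ μ v j) - Real.log (measureDiag u q v j))
      ≤ ∑ a, μ a * Real.log (μ a) - ∑ i, measureDiag φ μ u i * Real.log (q i) := by
  have h := sum_mul_log_sub_le_of_sum_sq_div_le (P := fun x : Fin d × Fin d => ov (φ x.1) (u x.2))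
    (α := fun x => μ x.1) (β := fun x => q x.2) (fun x => hμ x.1) (fun x => hq x.2)
    (measureDiag_pos hφ hv hμ) (measureDiag_pos hu hv hq) ?_ ?_ ?_
  · convert h using 1
    simp only [Fintype.sum_prod_type, mul_sub, sum_sub_distrib, measureDiag, sum_mul]
    congr 1
    · refine sum_congr rfl fun a _ => ?_
      rw [← sum_mul, ← sum_mul, hu.sum_ov_eq_one hφ a, one_mul]
    · rw [sum_comm]
      exact sum_congr rfl fun i _ => sum_congr rfl fun a _ => by ring
  · rw [sum_measureDiag hφ hv, Fintype.sum_prod_type]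
    exact sum_congr rfl fun a _ => by dsimp only; rw [← sum_mul, hu.sum_ov_eq_one hφ a, one_mul]
  · rw [sum_measureDiag hu hv, Fintype.sum_prod_type, sum_comm]
    exact sum_congr rfl fun i _ => by
      dsimp only; rw [← sum_mul, hφ.sum_ov_eq_one_left hu i, one_mul]
  · intro s hs
    simpa only [Fintype.sum_prod_type] using sum_sq_div_measureDiag_le hφ hu hv hμ
      (fun i => (hq i).le) hs

section MatrixLog

open Polynomial

variable {ι : Type} [Fintype ι] [DecidableEq ι]

lemma aeval_unitary_conj_diagonal {V : Matrix ι ι ℂ} (hV : V ∈ unitaryGroup ι ℂ) (f : ι → ℂ)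
    (p : ℂ[X]) :
    aeval (V * diagonal f * star V) p = V * diagonal (fun i => p.eval (f i)) * star V := by
  have hconj := aeval_algHom_apply
    (Unitary.conjStarAlgAut ℂ (Matrix ι ι ℂ) ⟨V, hV⟩).toAlgEquiv.toAlgHom (diagonal f) p
  have hdiag := aeval_algHom_apply (diagonalAlgHom ℂ (n := ι) (α := ℂ)) f p
  rw [diagonalAlgHom_apply, aeval_pi_apply] at hdiag
  simp only [AlgEquiv.coe_toAlgHom, StarAlgEquiv.coe_toAlgEquiv, Unitary.conjStarAlgAut_apply]
    at hconj
  rw [hconj, hdiag]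
  simp only [coe_aeval_eq_eval, diagonalAlgHom_apply]

/-- Both sides are `p(A)` for a polynomial `p` interpolating `logb 2` at the eigenvalues of both
diagonalizations. -/
lemma mlog2_unitary_conj_diagonal {V : Matrix ι ι ℂ} (hV : V ∈ unitaryGroup ι ℂ) (δ : ι → ℝ) :
    mlog2 (V * diagonal (fun i => (δ i : ℂ)) * star V)
      = V * diagonal (fun i => (Real.logb 2 (δ i) : ℂ)) * star V := by
  set A := V * diagonal (fun i => (δ i : ℂ)) * star V
  have hA : A.IsHermitian := by
    simpa [A, star_eq_conjTranspose] using isHermitian_mul_mul_conjTranspose V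
      (isHermitian_diagonal_of_self_adjoint _ (by ext i; simp))
  set U : Matrix ι ι ℂ := (hA.eigenvectorUnitary : Matrix ι ι ℂ)
  have hspec : A = U * diagonal (fun i => (hA.eigenvalues i : ℂ)) * star U := hA.spectral_theorem
  set nodes := univ.image (fun i => (δ i : ℂ)) ∪ univ.image (fun i => (hA.eigenvalues i : ℂ))
  set p := Lagrange.interpolate nodes id (fun z => (Real.logb 2 z.re : ℂ))
  have hp : ∀ x : ℝ, (x : ℂ) ∈ nodes → p.eval (x : ℂ) = Real.logb 2 x := fun x hx =>
    (Lagrange.eval_interpolate_at_node _ (Set.injOn_id _) hx).trans (by rw [Complex.ofReal_re])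
  have h1 := aeval_unitary_conj_diagonal hV (fun i => (δ i : ℂ)) p
  have h2 := aeval_unitary_conj_diagonal hA.eigenvectorUnitary.2
    (fun i => (hA.eigenvalues i : ℂ)) p
  rw [← hspec] at h2
  have hδ : ∀ i, p.eval (δ i : ℂ) = Real.logb 2 (δ i) := fun i =>
    hp _ (mem_union_left _ (mem_image_of_mem _ (mem_univ i)))
  have heig : ∀ i, p.eval (hA.eigenvalues i : ℂ) = Real.logb 2 (hA.eigenvalues i) := fun i =>
    hp _ (mem_union_right _ (mem_image_of_mem _ (mem_univ i)))
  simp only [hδ] at h1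
  simp only [heig] at h2
  rw [mlog2, dif_pos hA, ← h1]
  exact h2.symm

end MatrixLog

section Spectral

variable {d : ℕ} {ρ : Matrix (Fin d) (Fin d) ℂ}

lemma star_dotProduct_basisMatrix_diagonal_mulVec (e : Fin d → Fin d → ℂ) (f : Fin d → ℂ)
    (x y : Fin d → ℂ) :
    star x ⬝ᵥ ((basisMatrix e * diagonal f * (basisMatrix e)ᴴ) *ᵥ y)
      = ∑ a, f a * (inn x (e a) * inn (e a) y) := by
  rw [← mulVec_mulVec, ← mulVec_mulVec, dotProduct_mulVec]
  simp only [dotProduct, mulVec_diagonal, vecMul_basisMatrix, conjTranspose_basisMatrix_mulVec]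
  exact sum_congr rfl fun a _ => by ring

lemma re_trace_mul_basisMatrix_diagonal (ρ : Matrix (Fin d) (Fin d) ℂ) (e : Fin d → Fin d → ℂ)
    (f : Fin d → ℝ) :
    (ρ * (basisMatrix e * diagonal (fun j => (f j : ℂ)) * (basisMatrix e)ᴴ)).trace.re
      = ∑ j, f j * probM ρ e j := by
  rw [← mul_assoc, trace_mul_cycle, ← mul_assoc]
  simp only [trace, diag_apply, mul_diagonal, mul_mul_apply, Complex.re_sum, Complex.re_mul_ofReal]
  exact sum_congr rfl fun j _ => by rw [mul_comm]; rfl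

lemma IsONB.measureDiag_self {w : Fin d → Fin d → ℂ} (hw : IsONB w) (q : Fin d → ℝ) :
    measureDiag w q w = q := by
  funext j
  rw [measureDiag, sum_eq_single j (fun i _ hij => by simp [ov, hw i j, hij]) (by simp)]
  simp [ov, hw j j]

lemma sum_smul_vecMulVec_eq (v : Fin d → Fin d → ℂ) (β : Fin d → ℝ) :
    ∑ j, (β j : ℂ) • vecMulVec (v j) (star (v j))
      = basisMatrix v * diagonal (fun j => (β j : ℂ)) * (basisMatrix v)ᴴ := by
  ext k l
  rw [mul_apply, Matrix.sum_apply]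
  simp only [Matrix.smul_apply, vecMulVec_apply, mul_diagonal, basisMatrix, conjTranspose_apply,
    of_apply, Pi.star_apply, smul_eq_mul]
  exact sum_congr rfl fun j _ => by ring

noncomputable def eigenbasis (hρ : ρ.IsHermitian) : Fin d → Fin d → ℂ :=
  fun a k => (hρ.eigenvectorUnitary : Matrix (Fin d) (Fin d) ℂ) k a

lemma basisMatrix_eigenbasis (hρ : ρ.IsHermitian) :
    basisMatrix (eigenbasis hρ) = (hρ.eigenvectorUnitary : Matrix (Fin d) (Fin d) ℂ) := rfl

lemma isONB_eigenbasis (hρ : ρ.IsHermitian) : IsONB (eigenbasis hρ) := by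
  rw [isONB_iff_conjTranspose_mul_self, basisMatrix_eigenbasis, ← star_eq_conjTranspose]
  exact mem_unitaryGroup_iff'.mp hρ.eigenvectorUnitary.2

lemma eq_basisMatrix_eigenbasis (hρ : ρ.IsHermitian) :
    ρ = basisMatrix (eigenbasis hρ) * diagonal (fun a => (hρ.eigenvalues a : ℂ))
      * (basisMatrix (eigenbasis hρ))ᴴ := by
  rw [basisMatrix_eigenbasis, ← star_eq_conjTranspose]
  exact hρ.spectral_theorem

lemma probM_eq_measureDiag (hρ : ρ.IsHermitian) (w : Fin d → Fin d → ℂ) :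
    probM ρ w = measureDiag (eigenbasis hρ) hρ.eigenvalues w := by
  funext i
  conv_lhs => rw [probM, eq_basisMatrix_eigenbasis hρ, star_dotProduct_basisMatrix_diagonal_mulVec]
  simp_rw [inn_mul_inn_swap, ov_comm (w i), ← Complex.ofReal_mul, ← Complex.ofReal_sum,
    Complex.ofReal_re]
  rfl

lemma probM_eigenbasis (hρ : ρ.IsHermitian) : probM ρ (eigenbasis hρ) = hρ.eigenvalues := by
  rw [probM_eq_measureDiag hρ, (isONB_eigenbasis hρ).measureDiag_self]

lemma probM_pos (hρ : ρ.PosDef) {w : Fin d → Fin d → ℂ} (hw : IsONB w) (i : Fin d) :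
    0 < probM ρ w i := by
  rw [probM_eq_measureDiag hρ.isHermitian]
  exact measureDiag_pos (isONB_eigenbasis _) hw hρ.eigenvalues_pos i

lemma relEnt_sum_smul_vecMulVec (hρ : ρ.IsHermitian) {v : Fin d → Fin d → ℂ} (hv : IsONB v)
    (β : Fin d → ℝ) :
    relEnt ρ (∑ j, (β j : ℂ) • vecMulVec (v j) (star (v j)))
      = -vNEnt ρ - ∑ j, probM ρ v j * Real.logb 2 (β j) := by
  have hlogρ : mlog2 ρ = basisMatrix (eigenbasis hρ)
      * diagonal (fun a => (Real.logb 2 (hρ.eigenvalues a) : ℂ))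
      * (basisMatrix (eigenbasis hρ))ᴴ := by
    conv_lhs => rw [eq_basisMatrix_eigenbasis hρ]
    simpa only [star_eq_conjTranspose] using mlog2_unitary_conj_diagonal
      (isONB_eigenbasis hρ).basisMatrix_mem_unitaryGroup hρ.eigenvalues
  have hlogσ := mlog2_unitary_conj_diagonal hv.basisMatrix_mem_unitaryGroup β
  rw [star_eq_conjTranspose, ← sum_smul_vecMulVec_eq] at hlogσ
  rw [relEnt, hlogρ, hlogσ, Complex.sub_re, re_trace_mul_basisMatrix_diagonal,
    re_trace_mul_basisMatrix_diagonal, probM_eigenbasis, vNEnt, dif_pos hρ, neg_neg]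
  simp only [mul_comm (Real.logb 2 _)]

end Spectral

section Chain

variable {d : ℕ} {ρ : Matrix (Fin d) (Fin d) ℂ}

noncomputable def classicalRelEnt (p q : Fin d → ℝ) : ℝ :=
  ∑ i, p i * (Real.logb 2 (p i) - Real.logb 2 (q i))

lemma classicalRelEnt_self (p : Fin d → ℝ) : classicalRelEnt p p = 0 := by
  simp [classicalRelEnt]

lemma neg_sum_mul_logb_eq_shannon_add_classicalRelEnt (p q : Fin d → ℝ) :
    -∑ i, p i * Real.logb 2 (q i) = shannon p + classicalRelEnt p q := by
  simp only [shannon, classicalRelEnt, mul_sub, sum_sub_distrib]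
  ring

lemma sum_mul_logb (f g : Fin d → ℝ) :
    ∑ i, f i * Real.logb 2 (g i) = (∑ i, f i * Real.log (g i)) / Real.log 2 := by
  simp only [Real.logb, sum_div, mul_div_assoc]

theorem classicalRelEnt_measureDiag_le (hρ : ρ.PosDef) {u v : Fin d → Fin d → ℂ} (hu : IsONB u)
    (hv : IsONB v) {q : Fin d → ℝ} (hq : ∀ i, 0 < q i) :
    classicalRelEnt (probM ρ v) (measureDiag u q v)
      ≤ -vNEnt ρ + shannon (probM ρ u) + classicalRelEnt (probM ρ u) q := by
  have key := sum_measureDiag_mul_log_sub_le (isONB_eigenbasis hρ.isHermitian) hu hv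
    hρ.eigenvalues_pos hq
  simp only [← probM_eq_measureDiag, mul_sub, sum_sub_distrib] at key
  have hl : 0 < Real.log 2 := Real.log_pos one_lt_two
  have key' := div_le_div_of_nonneg_right key hl.le
  rw [vNEnt, dif_pos hρ.isHermitian]
  simp only [classicalRelEnt, shannon, mul_sub, sum_sub_distrib, sum_mul_logb] at key' ⊢
  rw [sub_div, sub_div] at key'
  linarith

lemma betaCoef_zero (u : Fin (0 + 2) → Fin d → Fin d → ℂ) :
    betaCoef ρ u = measureDiag (u 0) (probM ρ (u 0)) (u 1) := by
  funext j
  rw [betaCoef, ← (Equiv.funUnique (Fin 1) (Fin d)).symm.sum_comp]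
  simp [measureDiag, Fin.snoc]

lemma betaCoef_succ {n : ℕ} (u : Fin (n + 1 + 2) → Fin d → Fin d → ℂ) :
    betaCoef ρ u
      = measureDiag (u (Fin.last (n + 1)).castSucc) (betaCoef ρ (Fin.init u)) (u (Fin.last _)) := by
  funext j
  rw [betaCoef, ← (Fin.snocEquiv fun _ => Fin d).sum_comp, Fintype.sum_prod_type, measureDiag]
  refine sum_congr rfl fun i _ => ?_
  rw [betaCoef, sum_mul]
  refine sum_congr rfl fun g _ => ?_
  rw [Fin.prod_univ_castSucc]
  simp only [Fin.snocEquiv, Equiv.coe_fn_mk, Fin.init, Fin.succ_castSucc, Fin.snoc_castSucc,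
    Fin.snoc_last, Fin.succ_last]
  rw [show (0 : Fin (n + 2)) = Fin.castSucc 0 from rfl, Fin.snoc_castSucc]
  exact (mul_assoc _ _ _).symm

lemma betaCoef_pos (hρ : ρ.PosDef) {n : ℕ} {u : Fin (n + 2) → Fin d → Fin d → ℂ}
    (hu : ∀ m, IsONB (u m)) (j : Fin d) : 0 < betaCoef ρ u j := by
  induction n generalizing j with
  | zero => rw [betaCoef_zero]; exact measureDiag_pos (hu 0) (hu 1) (probM_pos hρ (hu 0)) j
  | succ n ih =>
    rw [betaCoef_succ]
    exact measureDiag_pos (hu _) (hu _) (fun i => ih (fun m => hu _) i) j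

theorem classicalRelEnt_betaCoef_le (hρ : ρ.PosDef) {n : ℕ} {u : Fin (n + 2) → Fin d → Fin d → ℂ}
    (hu : ∀ m, IsONB (u m)) :
    classicalRelEnt (probM ρ (u (Fin.last (n + 1)))) (betaCoef ρ u)
      ≤ -((n : ℝ) + 1) * vNEnt ρ + ∑ m : Fin (n + 1), shannon (probM ρ (u m.castSucc)) := by
  induction n with
  | zero =>
    have h := classicalRelEnt_measureDiag_le hρ (hu 0) (hu 1) (probM_pos hρ (hu 0))
    rw [classicalRelEnt_self] at h
    rw [betaCoef_zero]
    simpa using h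
  | succ n ih =>
    have h := classicalRelEnt_measureDiag_le hρ (hu (Fin.last (n + 1)).castSucc) (hu (Fin.last _))
      (betaCoef_pos hρ (u := Fin.init u) (fun m => hu _))
    have ih' := ih (u := Fin.init u) (fun m => hu _)
    rw [betaCoef_succ, Fin.sum_univ_castSucc]
    simp only [Fin.init] at h ih'
    push_cast
    linarith

end Chain

theorem relEnt_lemma_multi_general {d n : ℕ} (ρ : Matrix (Fin d) (Fin d) ℂ)
    (hρ : ρ.PosDef)
    (u : Fin (n + 2) → Fin d → Fin d → ℂ) (hu : ∀ m, IsONB (u m)) :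
    -((n : ℝ) + 2) * vNEnt ρ + ∑ m : Fin (n + 2), shannon (probM ρ (u m)) ≥
      relEnt ρ (∑ j, (betaCoef ρ u j : ℂ) •
        Matrix.vecMulVec (u (Fin.last (n + 1)) j) (star (u (Fin.last (n + 1)) j))) := by
  rw [relEnt_sum_smul_vecMulVec hρ.isHermitian (hu _), sub_eq_add_neg,
    neg_sum_mul_logb_eq_shannon_add_classicalRelEnt, Fin.sum_univ_castSucc]
  have h := classicalRelEnt_betaCoef_le hρ hu
  linarith

/-- Lemma 1 of the paper: for `N = n + 2 ≥ 2` projective measurements on a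
positive definite density matrix `ρ`,
`-N S(ρ) + ∑_m H(M_m) ≥ S(ρ ‖ ∑_j β^N_j |u^N_j⟩⟨u^N_j|)`. -/
theorem relEnt_lemma_multi {d n : ℕ} (ρ : Matrix (Fin d) (Fin d) ℂ)
    (hρ : ρ.PosDef) (hρ1 : ρ.trace = 1)
    (u : Fin (n + 2) → Fin d → Fin d → ℂ) (hu : ∀ m, IsONB (u m)) :
    -((n : ℝ) + 2) * vNEnt ρ + ∑ m : Fin (n + 2), shannon (probM ρ (u m)) ≥
      relEnt ρ (∑ j, (betaCoef ρ u j : ℂ) •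
        Matrix.vecMulVec (u (Fin.last (n + 1)) j) (star (u (Fin.last (n + 1)) j))) :=
  relEnt_lemma_multi_general ρ hρ u hu
end

section
/- Let ρ_AB = |ψ⟩⟨ψ| be a pure density matrix on ℂ^d ⊗ ℂ^{d_B} and let U = {|u_i⟩} be a projective measurement on A. Then H(U|B) = H(U) − S(ρ_B), i.e. S(∑_i (|u_i⟩⟨u_i| ⊗ I) ρ_AB (|u_i⟩⟨u_i| ⊗ I)) − S(ρ_B) = −∑_i p_i log₂ p_i − S(ρ_B), where p_i = Tr((|u_i⟩⟨u_i| ⊗ I) ρ_AB). -/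
open scoped BigOperators ComplexOrder

/-!
With `P i = |u_i⟩⟨u_i| ⊗ I`, the measured state `∑ i, P i |ψ⟩⟨ψ| P i` is `K Kᴴ`, where the
columns of `K` are the vectors `P i ψ`. Since the `P i` are mutually orthogonal projections,
`Kᴴ K` is diagonal with entries `⟨ψ|P i|ψ⟩ = p i`. The matrices `K Kᴴ` and `Kᴴ K` have the
same characteristic polynomial up to a power of `X`, hence the same nonzero eigenvalues, so the
von Neumann entropy of the measured state is the Shannon entropy of `p`.
-/

open Matrix Polynomial

theorem Matrix.IsHermitian.sum_eigenvalues_eq_of_X_pow_mul_charpoly {n ι : Type*}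
    [Fintype n] [DecidableEq n] [Fintype ι] {A : Matrix n n ℂ} (hA : A.IsHermitian)
    (Λ : ι → ℝ) {a b : ℕ} (h : X ^ a * A.charpoly = X ^ b * ∏ i, (X - C (Λ i : ℂ)))
    {g : ℝ → ℝ} (hg : g 0 = 0) : ∑ k, g (hA.eigenvalues k) = ∑ i, g (Λ i) := by
  have hmonic : (∏ i, (X - C (Λ i : ℂ))).Monic :=
    monic_prod_of_monic _ _ fun i _ => monic_X_sub_C _
  have hroots := congrArg roots h
  rw [roots_mul ((monic_X_pow a).mul A.charpoly_monic).ne_zero,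
    roots_mul ((monic_X_pow b).mul hmonic).ne_zero, roots_X_pow, roots_X_pow,
    hA.roots_charpoly_eq_eigenvalues, roots_prod _ _ hmonic.ne_zero] at hroots
  simpa [hg, Multiset.map_map, Function.comp_def, Multiset.map_nsmul, Multiset.sum_nsmul] using
    congrArg (fun s => ((s.map Complex.re).map g).sum) hroots

theorem Matrix.sum_eigenvalues_mul_conjTranspose_self {n ι : Type*} [Fintype n] [DecidableEq n]
    [Fintype ι] [DecidableEq ι] (K : Matrix n ι ℂ) {p : ι → ℝ}
    (hK : Kᴴ * K = diagonal fun i => (p i : ℂ)) {g : ℝ → ℝ} (hg : g 0 = 0) :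
    ∑ k, g ((isHermitian_mul_conjTranspose_self K).eigenvalues k) = ∑ i, g (p i) :=
  (isHermitian_mul_conjTranspose_self K).sum_eigenvalues_eq_of_X_pow_mul_charpoly p
    (by rw [charpoly_mul_comm', hK, charpoly_diagonal]) hg

theorem vNEnt_mul_conjTranspose_self {n ι : Type} [Fintype n] [DecidableEq n] [Fintype ι]
    [DecidableEq ι] (K : Matrix n ι ℂ) {p : ι → ℝ} (hK : Kᴴ * K = diagonal fun i => (p i : ℂ)) :
    vNEnt (K * Kᴴ) = -∑ i, p i * Real.logb 2 (p i) := by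
  rw [vNEnt, dif_pos (isHermitian_mul_conjTranspose_self K),
    sum_eigenvalues_mul_conjTranspose_self K hK (g := fun x => x * Real.logb 2 x) (by simp)]

theorem Matrix.trace_mul_vecMulVec_star {n : Type*} [Fintype n] (A : Matrix n n ℂ)
    (ψ : n → ℂ) : (A * vecMulVec ψ (star ψ)).trace = star ψ ⬝ᵥ A *ᵥ ψ := by
  rw [mul_vecMulVec, trace_vecMulVec, dotProduct_comm]

theorem Matrix.IsHermitian.ofReal_re_trace_mul_vecMulVec_star {n : Type*} [Fintype n]
    {A : Matrix n n ℂ} (hA : A.IsHermitian) (ψ : n → ℂ) :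
    (((A * vecMulVec ψ (star ψ)).trace).re : ℂ) = (A * vecMulVec ψ (star ψ)).trace := by
  rw [trace_mul_vecMulVec_star]
  exact Complex.ext rfl (hA.im_star_dotProduct_mulVec_self ψ).symm

def projColumns {n ι : Type*} [Fintype n] (P : ι → Matrix n n ℂ) (ψ : n → ℂ) : Matrix n ι ℂ :=
  of fun x i => (P i *ᵥ ψ) x

theorem projColumns_mul_conjTranspose {n ι : Type*} [Fintype n] [Fintype ι]
    {P : ι → Matrix n n ℂ} (hP : ∀ i, (P i).IsHermitian) (ψ : n → ℂ) :
    projColumns P ψ * (projColumns P ψ)ᴴ = ∑ i, P i * vecMulVec ψ (star ψ) * P i := by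
  have hPρP : ∀ i, P i * vecMulVec ψ (star ψ) * P i =
      vecMulVec (P i *ᵥ ψ) (star (P i *ᵥ ψ)) :=
    fun i => by rw [mul_vecMulVec, vecMulVec_mul, star_mulVec, (hP i).eq]
  ext x y
  simp [projColumns, hPρP, Matrix.sum_apply, mul_apply, vecMulVec_apply]

theorem conjTranspose_projColumns_mul {n ι : Type*} [Fintype n] [DecidableEq ι]
    {P : ι → Matrix n n ℂ} (hP : ∀ i, (P i).IsHermitian)
    (hPP : ∀ i j, P i * P j = if i = j then P i else 0) (ψ : n → ℂ) :
    (projColumns P ψ)ᴴ * projColumns P ψ =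
      diagonal fun i => (((P i * vecMulVec ψ (star ψ)).trace).re : ℂ) := by
  ext i j
  change star (P i *ᵥ ψ) ⬝ᵥ (P j *ᵥ ψ) = _
  rw [star_mulVec, (hP i).eq, ← dotProduct_mulVec, mulVec_mulVec, hPP, diagonal_apply]
  split_ifs with hij
  · rw [hij, (hP j).ofReal_re_trace_mul_vecMulVec_star, trace_mul_vecMulVec_star]
  · simp

theorem vNEnt_sum_mul_vecMulVec_star_mul {n ι : Type} [Fintype n] [DecidableEq n] [Fintype ι]
    [DecidableEq ι] {P : ι → Matrix n n ℂ} (hP : ∀ i, (P i).IsHermitian)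
    (hPP : ∀ i j, P i * P j = if i = j then P i else 0) (ψ : n → ℂ) :
    vNEnt (∑ i, P i * vecMulVec ψ (star ψ) * P i) =
      -∑ i, ((P i * vecMulVec ψ (star ψ)).trace).re *
        Real.logb 2 ((P i * vecMulVec ψ (star ψ)).trace).re := by
  rw [← projColumns_mul_conjTranspose hP,
    vNEnt_mul_conjTranspose_self _ (conjTranspose_projColumns_mul hP hPP ψ)]

theorem isHermitian_projA {d : ℕ} (dB : ℕ) (a : Fin d → ℂ) : (projA dB a).IsHermitian := by
  rw [IsHermitian, projA, conjTranspose_kronecker, conjTranspose_vecMulVec, star_star,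
    conjTranspose_one]

theorem IsONB.projA_mul_projA {d : ℕ} {u : Fin d → Fin d → ℂ} (hu : IsONB u) (dB : ℕ)
    (i j : Fin d) :
    projA dB (u i) * projA dB (u j) = if i = j then projA dB (u i) else 0 := by
  have hinn : star (u i) ⬝ᵥ u j = if i = j then 1 else 0 := hu i j
  rw [projA, projA, ← mul_kronecker_mul, vecMulVec_mul_vecMulVec, hinn, mul_one]
  split_ifs with hij
  · rw [hij, one_smul]
  · rw [zero_smul, vecMulVec_zero, zero_kronecker]

theorem pure_conditional_entropy_general {d dB : ℕ}
    (ψ : Fin d × Fin dB → ℂ)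
    (ρAB : Matrix (Fin d × Fin dB) (Fin d × Fin dB) ℂ)
    (hρ : ρAB = Matrix.vecMulVec ψ (star ψ))
    (u : Fin d → Fin d → ℂ) (hu : IsONB u) :
    vNEnt (∑ i, projA dB (u i) * ρAB * projA dB (u i)) - vNEnt (trA ρAB) =
      (-∑ i, ((projA dB (u i) * ρAB).trace).re *
          Real.logb 2 (((projA dB (u i) * ρAB).trace).re)) - vNEnt (trA ρAB) := by
  subst hρ
  rw [vNEnt_sum_mul_vecMulVec_star_mul (fun i => isHermitian_projA dB (u i))
    (hu.projA_mul_projA dB) ψ]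

/-- for a pure bipartite density matrix `ρ_AB = |ψ⟩⟨ψ|` and a projective
measurement `U` on `A`, `H(U|B) = H(U) - S(ρ_B)`, i.e.
`S(∑_i (|u_i⟩⟨u_i|⊗I) ρ_AB (|u_i⟩⟨u_i|⊗I)) - S(ρ_B) = -∑_i p_i log₂ p_i - S(ρ_B)` with
`p_i = Tr((|u_i⟩⟨u_i|⊗I) ρ_AB)`. -/
theorem pure_conditional_entropy {d dB : ℕ}
    (ψ : Fin d × Fin dB → ℂ) (hψ : ∑ p, ‖ψ p‖ ^ 2 = 1)
    (ρAB : Matrix (Fin d × Fin dB) (Fin d × Fin dB) ℂ)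
    (hρ : ρAB = Matrix.vecMulVec ψ (star ψ))
    (u : Fin d → Fin d → ℂ) (hu : IsONB u) :
    vNEnt (∑ i, projA dB (u i) * ρAB * projA dB (u i)) - vNEnt (trA ρAB) =
      (-∑ i, ((projA dB (u i) * ρAB).trace).re *
          Real.logb 2 (((projA dB (u i) * ρAB).trace).re)) - vNEnt (trA ρAB) :=
  pure_conditional_entropy_general ψ ρAB hρ u hu
end
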